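/- arXiv:2305.07459 — 2 statements merged into one kernel-verified Lean document; each statement's English description precedes it below -/
import Mathlib

section
/- Let D₁, D₂ ⊂ ℝ³ be bounded domains with x̂·D₁ ∩ x̂·D₂ = ∅ for a fixed x̂ ∈ S², and let T = t_max − t_min > 0. Suppose inf(x̂·D₁) − sup(x̂·D₂) > T or inf(x̂·D₂) − sup(x̂·D₁) > T. If L_{D₁} f₁ = L_{D₂} f₂ in L²(0,K) for f_j ∈ L²(D_j × (t_min, t_max)), where (L_{D_j} f)(τ) = ∫_{t_min}^{t_max} ∫_{D_j} e^{−iτ(x̂·y−t)} f(y,t) dy dt, then L_{D₁} f₁ = L_{D₂} f₂ = 0. -/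
open MeasureTheory Complex
open scoped RealInnerProductSpace

noncomputable section

abbrev E3 := EuclideanSpace ℝ (Fin 3)

def phase (τ ξ : ℝ) : ℂ := Complex.exp (-Complex.I * τ * ξ)

/-!
On `D × (t_min, t_max)` the phase `ξ (y, t) = x̂·y − t` takes values in
`[inf x̂·D − t_max, sup x̂·D − t_min]`, so `τ ↦ L_D f (τ)` extends to an entire function `G` with
`‖G z‖ ≤ C e^{a Im z}` for `Im z ≤ 0` and `‖G z‖ ≤ C e^{b Im z}` for `Im z ≥ 0`, where `[a, b]`
is that interval. Since the extensions are entire, `L_{D₁} f₁ = L_{D₂} f₂` on `(0, K)` forces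
them to agree on all of `ℂ`. The gap condition says that the interval of one domain lies strictly to
the right of the other's, `b₂ < a₁` say; then `e^{i a₁ z} G₁` is bounded on both half-planes, hence
constant by Liouville, and it decays along the positive imaginary axis, so it vanishes.
-/

open Filter Set Topology

lemma Complex.norm_exp_neg_I_mul_mul_ofReal (z : ℂ) (c : ℝ) :
    ‖cexp (-I * z * c)‖ = Real.exp (c * z.im) := by
  rw [Complex.norm_exp]
  simp [Complex.mul_re]
  ring

lemma Differentiable.eq_of_eqOn_Ioo {f g : ℂ → ℂ} (hf : Differentiable ℂ f)
    (hg : Differentiable ℂ g) {a b : ℝ} (hab : a < b) (hfg : ∀ x ∈ Ioo a b, f x = g x) :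
    f = g := by
  have hc : Ioo a b ∈ 𝓝 ((a + b) / 2) := Ioo_mem_nhds (by linarith) (by linarith)
  have hreal : ∃ᶠ x : ℝ in 𝓝[≠] ((a + b) / 2), f x = g x :=
    (eventually_nhdsWithin_of_eventually_nhds (Filter.mem_of_superset hc hfg)).frequently
  refine (hf.differentiableOn.analyticOnNhd isOpen_univ).eq_of_frequently_eq
    (hg.differentiableOn.analyticOnNhd isOpen_univ) (z₀ := (((a + b) / 2 : ℝ) : ℂ)) ?_
  exact (continuous_ofReal.continuousWithinAt.tendsto_nhdsWithin
    fun _ hx => ofReal_injective.ne hx).frequently hreal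

/-- A Liouville argument: `e^{i a z} G` is bounded on `ℂ`, hence constant, and it decays along the
positive imaginary axis. -/
lemma Differentiable.eq_zero_of_norm_le_exp_mul_im {G : ℂ → ℂ} (hG : Differentiable ℂ G)
    {a b C₁ C₂ : ℝ} (hba : b < a)
    (hlow : ∀ z : ℂ, z.im ≤ 0 → ‖G z‖ ≤ Real.exp (a * z.im) * C₁)
    (hup : ∀ z : ℂ, 0 ≤ z.im → ‖G z‖ ≤ Real.exp (b * z.im) * C₂) : G = 0 := by
  set M : ℂ → ℂ := fun z => cexp (I * z * a) * G z
  have hnormM : ∀ z, ‖M z‖ = Real.exp (-(a * z.im)) * ‖G z‖ := fun z => by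
    rw [norm_mul, Complex.norm_exp]
    simp [Complex.mul_re, mul_comm]
  have hC₂ : 0 ≤ C₂ := by simpa using (norm_nonneg _).trans (hup 0 le_rfl)
  have hMup : ∀ z : ℂ, 0 ≤ z.im → ‖M z‖ ≤ Real.exp ((b - a) * z.im) * C₂ := fun z hz =>
    calc ‖M z‖ ≤ Real.exp (-(a * z.im)) * (Real.exp (b * z.im) * C₂) := by
          rw [hnormM]; gcongr; exact hup z hz
      _ = Real.exp ((b - a) * z.im) * C₂ := by rw [← mul_assoc, ← Real.exp_add]; ring_nf
  have hMlow : ∀ z : ℂ, z.im ≤ 0 → ‖M z‖ ≤ C₁ := fun z hz =>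
    calc ‖M z‖ ≤ Real.exp (-(a * z.im)) * (Real.exp (a * z.im) * C₁) := by
          rw [hnormM]; gcongr; exact hlow z hz
      _ = C₁ := by rw [← mul_assoc, ← Real.exp_add, neg_add_cancel, Real.exp_zero, one_mul]
  have hMbdd : Bornology.IsBounded (range M) := by
    refine isBounded_iff_forall_norm_le.2 ⟨max C₁ C₂, ?_⟩
    rintro _ ⟨z, rfl⟩
    rcases le_total z.im 0 with hz | hz
    · exact le_max_of_le_left (hMlow z hz)
    · refine le_max_of_le_right ((hMup z hz).trans (mul_le_of_le_one_left hC₂ ?_))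
      exact Real.exp_le_one_iff.2 (mul_nonpos_of_nonpos_of_nonneg (by linarith) hz)
  have hMdiff : Differentiable ℂ M := by fun_prop
  have hM0 : M 0 = 0 := by
    have hdecay : Tendsto (fun t : ℝ => Real.exp ((b - a) * t) * C₂) atTop (𝓝 0) := by
      simpa using (Real.tendsto_exp_atBot.comp
        (tendsto_id.const_mul_atTop_of_neg (sub_neg.2 hba))).mul_const C₂
    refine norm_le_zero_iff.1 (ge_of_tendsto hdecay ?_)
    filter_upwards [eventually_ge_atTop 0] with t ht
    have hMt := hMup (t * I) (by simpa using ht)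
    rwa [hMdiff.apply_eq_apply_of_bounded hMbdd (t * I) 0, mul_I_im, ofReal_re] at hMt
  funext z
  simpa [M, exp_ne_zero] using (hMdiff.apply_eq_apply_of_bounded hMbdd z 0).trans hM0

lemma mul_im_le_of_abs_le {x R : ℝ} (hx : |x| ≤ R) {z w : ℂ} (hzw : ‖z - w‖ < 1) :
    x * z.im ≤ R * (‖w‖ + 1) := by
  have hR : 0 ≤ R := (abs_nonneg x).trans hx
  have him : |z.im| ≤ ‖w‖ + 1 := by
    linarith [abs_im_le_norm z, norm_sub_norm_le z w]
  calc x * z.im ≤ |x| * |z.im| := by rw [← abs_mul]; exact le_abs_self _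
    _ ≤ R * (‖w‖ + 1) := mul_le_mul hx him (abs_nonneg _) hR

section FourierLaplace

variable {X : Type*} [MeasurableSpace X] {μ : Measure X} {ξ : X → ℝ} {f : X → ℂ}

/-- The paper's `L_D f (τ)` is `fourierLaplace (volume.restrict (D ×ˢ Ioo t_min t_max))
(fun p => ⟪x̂, p.1⟫ - p.2) f τ`. -/
def fourierLaplace (μ : Measure X) (ξ : X → ℝ) (f : X → ℂ) (z : ℂ) : ℂ :=
  ∫ p, cexp (-I * z * ξ p) * f p ∂μ

lemma aestronglyMeasurable_fourierLaplace_integrand (hξ : Measurable ξ)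
    (hf : AEStronglyMeasurable f μ) (z : ℂ) :
    AEStronglyMeasurable (fun p => cexp (-I * z * ξ p) * f p) μ :=
  (by fun_prop : Measurable fun p => cexp (-I * z * ξ p)).aestronglyMeasurable.mul hf

lemma integrable_fourierLaplace_integrand (hξ : Measurable ξ) (hf : Integrable f μ) {z : ℂ}
    {c : ℝ} (hc : ∀ᵐ p ∂μ, ξ p * z.im ≤ c) :
    Integrable (fun p => cexp (-I * z * ξ p) * f p) μ := by
  refine (hf.norm.const_mul (Real.exp c)).mono'
    (aestronglyMeasurable_fourierLaplace_integrand hξ hf.1 z) ?_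
  filter_upwards [hc] with p hp
  rw [norm_mul, norm_exp_neg_I_mul_mul_ofReal]
  gcongr

lemma norm_fourierLaplace_le (hξ : Measurable ξ) (hf : Integrable f μ) {z : ℂ} {c : ℝ}
    (hc : ∀ᵐ p ∂μ, ξ p * z.im ≤ c) :
    ‖fourierLaplace μ ξ f z‖ ≤ Real.exp c * ∫ p, ‖f p‖ ∂μ :=
  calc ‖fourierLaplace μ ξ f z‖
      ≤ ∫ p, ‖cexp (-I * z * ξ p) * f p‖ ∂μ := norm_integral_le_integral_norm _
    _ ≤ ∫ p, Real.exp c * ‖f p‖ ∂μ := by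
        refine integral_mono_ae (integrable_fourierLaplace_integrand hξ hf hc).norm
          (hf.norm.const_mul _) ?_
        filter_upwards [hc] with p hp
        rw [norm_mul, norm_exp_neg_I_mul_mul_ofReal]
        gcongr
    _ = Real.exp c * ∫ p, ‖f p‖ ∂μ := integral_const_mul _ _

lemma differentiable_fourierLaplace (hξ : Measurable ξ) (hf : Integrable f μ) {a b : ℝ}
    (hab : ∀ᵐ p ∂μ, ξ p ∈ Icc a b) : Differentiable ℂ (fourierLaplace μ ξ f) := by
  intro w
  set R := max |a| |b|
  have hR : ∀ᵐ p ∂μ, |ξ p| ≤ R := hab.mono fun p hp => abs_le_max_abs_abs hp.1 hp.2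
  have hbound : ∀ z ∈ Metric.ball w 1, ∀ᵐ p ∂μ, ξ p * z.im ≤ R * (‖w‖ + 1) := fun z hz => by
    filter_upwards [hR] with p hp
    exact mul_im_le_of_abs_le hp (mem_ball_iff_norm.1 hz)
  refine (hasDerivAt_integral_of_dominated_loc_of_deriv_le (Metric.ball_mem_nhds w one_pos)
    (F' := fun z p => cexp (-I * z * ξ p) * (-I * ξ p * f p))
    (bound := fun p => Real.exp (R * (‖w‖ + 1)) * (R * ‖f p‖))
    (.of_forall fun z => aestronglyMeasurable_fourierLaplace_integrand hξ hf.1 z)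
    (integrable_fourierLaplace_integrand hξ hf (hbound w (Metric.mem_ball_self one_pos)))
    (aestronglyMeasurable_fourierLaplace_integrand hξ
      ((by fun_prop : Measurable fun p => -I * ξ p).aestronglyMeasurable.mul hf.1) w)
    ?_ ((hf.norm.const_mul R).const_mul _) ?_).2.differentiableAt
  · filter_upwards [hR] with p hp z hz
    rw [norm_mul, norm_exp_neg_I_mul_mul_ofReal, norm_mul, norm_mul, norm_neg, norm_I, one_mul,
      norm_real, Real.norm_eq_abs]
    exact mul_le_mul (Real.exp_le_exp.2 (mul_im_le_of_abs_le hp (mem_ball_iff_norm.1 hz)))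
      (mul_le_mul_of_nonneg_right hp (norm_nonneg _)) (by positivity) (Real.exp_nonneg _)
  · refine .of_forall fun p z _ => ?_
    have := (((hasDerivAt_id z).const_mul (-I)).mul_const (ξ p : ℂ)).cexp.mul_const (f p)
    simpa [mul_comm, mul_left_comm, mul_assoc] using this

theorem fourierLaplace_eq_zero_of_eqOn_Ioo {μ₁ μ₂ : Measure X} {f₁ f₂ : X → ℂ}
    (hξ : Measurable ξ) (hf₁ : Integrable f₁ μ₁)
    (hf₂ : Integrable f₂ μ₂) {a₁ b₁ a₂ b₂ : ℝ} (h₁ : ∀ᵐ p ∂μ₁, ξ p ∈ Icc a₁ b₁)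
    (h₂ : ∀ᵐ p ∂μ₂, ξ p ∈ Icc a₂ b₂) (hgap : b₂ < a₁) {K : ℝ} (hK : 0 < K)
    (heq : ∀ τ ∈ Ioo 0 K, fourierLaplace μ₁ ξ f₁ τ = fourierLaplace μ₂ ξ f₂ τ) :
    fourierLaplace μ₁ ξ f₁ = 0 ∧ fourierLaplace μ₂ ξ f₂ = 0 := by
  have hF : fourierLaplace μ₁ ξ f₁ = fourierLaplace μ₂ ξ f₂ :=
    (differentiable_fourierLaplace hξ hf₁ h₁).eq_of_eqOn_Ioo
      (differentiable_fourierLaplace hξ hf₂ h₂) hK heq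
  have hzero : fourierLaplace μ₁ ξ f₁ = 0 :=
    (differentiable_fourierLaplace hξ hf₁ h₁).eq_zero_of_norm_le_exp_mul_im hgap
      (fun z hz => norm_fourierLaplace_le hξ hf₁
        (h₁.mono fun p hp => mul_le_mul_of_nonpos_right hp.1 hz))
      (fun z hz => hF ▸ norm_fourierLaplace_le hξ hf₂
        (h₂.mono fun p hp => mul_le_mul_of_nonneg_right hp.2 hz))
  exact ⟨hzero, hF ▸ hzero⟩

end FourierLaplace

section Slab

variable {E : Type*} [NormedAddCommGroup E] [InnerProductSpace ℝ E] {D : Set E}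

lemma inner_sub_mem_Icc_of_mem_prod_Ioo (hD : Bornology.IsBounded D) (v : E) {s t : ℝ}
    {p : E × ℝ} (hp : p ∈ D ×ˢ Ioo s t) :
    ⟪v, p.1⟫ - p.2 ∈
      Icc (sInf ((fun y => ⟪v, y⟫) '' D) - t) (sSup ((fun y => ⟪v, y⟫) '' D) - s) := by
  have hbdd : Bornology.IsBounded ((fun y => ⟪v, y⟫) '' D) :=
    (innerSL ℝ v).lipschitz.isBounded_image hD
  have hmem : ⟪v, p.1⟫ ∈ (fun y => ⟪v, y⟫) '' D := mem_image_of_mem _ hp.1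
  constructor
  · linarith [csInf_le hbdd.bddBelow hmem, hp.2.2]
  · linarith [le_csSup hbdd.bddAbove hmem, hp.2.1]

lemma ae_restrict_inner_sub_mem_Icc [MeasurableSpace E] [OpensMeasurableSpace E]
    (μ : Measure (E × ℝ)) (hD : Bornology.IsBounded D) (v : E) (s t : ℝ) :
    ∀ᵐ p ∂μ.restrict (D ×ˢ Ioo s t), ⟪v, p.1⟫ - p.2 ∈
      Icc (sInf ((fun y => ⟪v, y⟫) '' D) - t) (sSup ((fun y => ⟪v, y⟫) '' D) - s) := by
  have hclosed : IsClosed {p : E × ℝ | ⟪v, p.1⟫ - p.2 ∈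
      Icc (sInf ((fun y => ⟪v, y⟫) '' D) - t) (sSup ((fun y => ⟪v, y⟫) '' D) - s)} :=
    isClosed_Icc.preimage (by fun_prop)
  exact ae_restrict_of_ae_restrict_of_subset
    (fun p hp => inner_sub_mem_Icc_of_mem_prod_Ioo hD v hp)
    (ae_restrict_mem hclosed.measurableSet)

end Slab

lemma MeasureTheory.MemLp.integrable_restrict_of_isBounded {α E : Type*} [PseudoMetricSpace α]
    [ProperSpace α] [MeasurableSpace α] {μ : Measure α} [IsFiniteMeasureOnCompacts μ] {s : Set α}
    [NormedAddCommGroup E] (hs : Bornology.IsBounded s) {q : ENNReal} (hq : 1 ≤ q) {f : α → E}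
    (hf : MemLp f q (μ.restrict s)) : Integrable f (μ.restrict s) :=
  have : IsFiniteMeasure (μ.restrict s) := isFiniteMeasure_restrict.2 hs.measure_lt_top.ne
  hf.integrable hq

theorem stmt_8_general (D₁ D₂ : Set E3)
    (hD₁bdd : Bornology.IsBounded D₁)
    (hD₂bdd : Bornology.IsBounded D₂)
    (tmin tmax Kb : ℝ) (hK : 0 < Kb)
    (xhat : E3)
    -- the gap condition:
    (hgap : sInf ((fun y => ⟪xhat, y⟫) '' D₁) - sSup ((fun y => ⟪xhat, y⟫) '' D₂)
        > tmax - tmin ∨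
      sInf ((fun y => ⟪xhat, y⟫) '' D₂) - sSup ((fun y => ⟪xhat, y⟫) '' D₁)
        > tmax - tmin)
    (f₁ f₂ : E3 × ℝ → ℂ)
    (hf₁ : MemLp f₁ 2 ((volume : Measure (E3 × ℝ)).restrict (D₁ ×ˢ Set.Ioo tmin tmax)))
    (hf₂ : MemLp f₂ 2 ((volume : Measure (E3 × ℝ)).restrict (D₂ ×ˢ Set.Ioo tmin tmax)))
    (G₁ G₂ : ℝ → ℂ)
    (hG₁ : ∀ τ : ℝ, G₁ τ =
      ∫ p in D₁ ×ˢ Set.Ioo tmin tmax, phase τ (⟪xhat, p.1⟫ - p.2) * f₁ p)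
    (hG₂ : ∀ τ : ℝ, G₂ τ =
      ∫ p in D₂ ×ˢ Set.Ioo tmin tmax, phase τ (⟪xhat, p.1⟫ - p.2) * f₂ p)
    -- `L_{D₁} f₁ = L_{D₂} f₂` in `L²(0,K)`:
    (heq : ∀ τ ∈ Set.Ioo (0 : ℝ) Kb, G₁ τ = G₂ τ) :
    ∀ τ : ℝ, G₁ τ = 0 ∧ G₂ τ = 0 := by
  have hξ : Measurable fun p : E3 × ℝ => ⟪xhat, p.1⟫ - p.2 := by fun_prop
  have hint₁ :=
    hf₁.integrable_restrict_of_isBounded (hD₁bdd.prod (Metric.isBounded_Ioo _ _)) one_le_two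
  have hint₂ :=
    hf₂.integrable_restrict_of_isBounded (hD₂bdd.prod (Metric.isBounded_Ioo _ _)) one_le_two
  have h₁ := ae_restrict_inner_sub_mem_Icc volume hD₁bdd xhat tmin tmax
  have h₂ := ae_restrict_inner_sub_mem_Icc volume hD₂bdd xhat tmin tmax
  obtain ⟨hzero₁, hzero₂⟩ : fourierLaplace _ _ f₁ = 0 ∧ fourierLaplace _ _ f₂ = 0 := by
    rcases hgap with hgap | hgap
    · exact fourierLaplace_eq_zero_of_eqOn_Ioo hξ hint₁ hint₂ h₁ h₂ (by linarith) hK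
        fun τ hτ => (hG₁ τ).symm.trans ((heq τ hτ).trans (hG₂ τ))
    · exact (fourierLaplace_eq_zero_of_eqOn_Ioo hξ hint₂ hint₁ h₂ h₁ (by linarith) hK
        fun τ hτ => (hG₂ τ).symm.trans ((heq τ hτ).symm.trans (hG₁ τ))).symm
  exact fun τ => ⟨(hG₁ τ).trans (congrFun hzero₁ τ), (hG₂ τ).trans (congrFun hzero₂ τ)⟩

theorem stmt_8 (D₁ D₂ : Set E3)
    (hD₁open : IsOpen D₁) (hD₁ne : D₁.Nonempty) (hD₁bdd : Bornology.IsBounded D₁)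
    (hD₂open : IsOpen D₂) (hD₂ne : D₂.Nonempty) (hD₂bdd : Bornology.IsBounded D₂)
    (tmin tmax Kb : ℝ) (htmin : 0 ≤ tmin) (ht : tmin < tmax) (hK : 0 < Kb)
    (xhat : E3) (hx : ‖xhat‖ = 1)
    -- `x̂·D₁ ∩ x̂·D₂ = ∅`:
    (hdisj : ((fun y => ⟪xhat, y⟫) '' D₁) ∩ ((fun y => ⟪xhat, y⟫) '' D₂) = ∅)
    -- the gap condition:
    (hgap : sInf ((fun y => ⟪xhat, y⟫) '' D₁) - sSup ((fun y => ⟪xhat, y⟫) '' D₂)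
        > tmax - tmin ∨
      sInf ((fun y => ⟪xhat, y⟫) '' D₂) - sSup ((fun y => ⟪xhat, y⟫) '' D₁)
        > tmax - tmin)
    (f₁ f₂ : E3 × ℝ → ℂ)
    (hf₁ : MemLp f₁ 2 ((volume : Measure (E3 × ℝ)).restrict (D₁ ×ˢ Set.Ioo tmin tmax)))
    (hf₂ : MemLp f₂ 2 ((volume : Measure (E3 × ℝ)).restrict (D₂ ×ˢ Set.Ioo tmin tmax)))
    (G₁ G₂ : ℝ → ℂ)
    (hG₁ : ∀ τ : ℝ, G₁ τ =
      ∫ p in D₁ ×ˢ Set.Ioo tmin tmax, phase τ (⟪xhat, p.1⟫ - p.2) * f₁ p)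
    (hG₂ : ∀ τ : ℝ, G₂ τ =
      ∫ p in D₂ ×ˢ Set.Ioo tmin tmax, phase τ (⟪xhat, p.1⟫ - p.2) * f₂ p)
    -- `L_{D₁} f₁ = L_{D₂} f₂` in `L²(0,K)`:
    (heq : ∀ τ ∈ Set.Ioo (0 : ℝ) Kb, G₁ τ = G₂ τ) :
    ∀ τ : ℝ, G₁ τ = 0 ∧ G₂ τ = 0 :=
  stmt_8_general D₁ D₂ hD₁bdd hD₂bdd tmin tmax Kb hK xhat hgap f₁ f₂ hf₁ hf₂ G₁ G₂ hG₁ hG₂ heq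

end
end

section
/- With φ_{y,ε} as above and F⁻¹ the one-dimensional inverse Fourier transform, the function F⁻¹φ_{y,ε} is strictly positive on the open interval (x̂·y − ε − t_max, x̂·y + ε − t_min) and vanishes outside this interval. -/
open MeasureTheory Complex
open scoped RealInnerProductSpace

noncomputable section

/-! The phase factorizes, `phase τ (x̂·z - t) = phase τ (x̂·z) * phase τ (-t)`, so up to
the normalising constant `φ τ` is the product of `∫_{tmin}^{tmax} phase τ (-t) dt` and
`∫_{B_ε(y)} phase τ (x̂·z) dz`. Rotating `x̂` to the first basis vector and slicing the ball
by the planes `x̂·z = u` (Cavalieri) turns the latter into `∫ phase τ u * A u du`, where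
`A u = π (ε² - (u - x̂·y)²)₊` is the area of the disc `{x̂·z = u} ∩ B_ε(y)`. On the other
side `g ξ` is, up to the same constant, `∫_{tmin}^{tmax} A (ξ + s) ds`, and Fubini gives the
same product. Since `A` is continuous, nonnegative, and positive exactly on
`(x̂·y - ε, x̂·y + ε)`, `g ξ > 0` exactly when `(ξ + tmin, ξ + tmax)` meets that interval. -/

theorem norm_phase (τ ξ : ℝ) : ‖phase τ ξ‖ = 1 := by
  simp [phase, Complex.norm_exp]

theorem phase_sub (τ ξ t : ℝ) : phase τ (ξ - t) = phase τ ξ * phase τ (-t) := by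
  rw [phase, phase, phase, ← Complex.exp_add]
  push_cast
  ring_nf

theorem continuous_phase (τ : ℝ) : Continuous (phase τ) := by
  unfold phase
  fun_prop

theorem MeasureTheory.setIntegral_prod_comp_fst {α β E : Type*} [MeasurableSpace α]
    [MeasurableSpace β] [NormedAddCommGroup E] [NormedSpace ℝ E] [CompleteSpace E]
    {μ : Measure α} {ν : Measure β} [SFinite μ] [SFinite ν] {s : Set (α × β)}
    (hs : MeasurableSet s) {f : α → E} (hf : IntegrableOn (fun p => f p.1) s (μ.prod ν)) :
    ∫ p in s, f p.1 ∂μ.prod ν = ∫ u, ν.real (Prod.mk u ⁻¹' s) • f u ∂μ := by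
  rw [← integral_indicator hs, integral_prod _ ((integrable_indicator_iff hs).mpr hf)]
  congr 1 with u
  rw [← integral_indicator_const _ (measurable_prodMk_left hs)]
  rfl

namespace EuclideanSpace

def headTailEquiv (n : ℕ) : EuclideanSpace ℝ (Fin (n + 1)) ≃ᵐ ℝ × EuclideanSpace ℝ (Fin n) :=
  (MeasurableEquiv.toLp 2 _).symm.trans <|
    (MeasurableEquiv.piFinSuccAbove (fun _ => ℝ) 0).trans <|
      MeasurableEquiv.prodCongr (MeasurableEquiv.refl ℝ) (MeasurableEquiv.toLp 2 _)

theorem measurePreserving_headTailEquiv (n : ℕ) : MeasurePreserving (headTailEquiv n) :=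
  (volume_preserving_symm_measurableEquiv_toLp _).trans <|
    (measurePreserving_piFinSuccAbove (fun _ => volume) 0).trans <|
      (MeasurePreserving.id volume).prod (PiLp.volume_preserving_toLp _)

theorem dist_sq_eq_sq_add_dist_headTailEquiv_sq {n : ℕ} (x y : EuclideanSpace ℝ (Fin (n + 1))) :
    dist x y ^ 2 = (x 0 - y 0) ^ 2 + dist (headTailEquiv n x).2 (headTailEquiv n y).2 ^ 2 := by
  simp only [EuclideanSpace.dist_eq, Real.sq_sqrt (Finset.sum_nonneg fun _ _ => sq_nonneg _)]
  rw [Fin.sum_univ_succ]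
  simp [headTailEquiv, Real.dist_eq, sq_abs]
  rfl

end EuclideanSpace

section Slicing

variable {E : Type*} [NormedAddCommGroup E] [InnerProductSpace ℝ E] [FiniteDimensional ℝ E]

open Module in
theorem exists_orthonormalBasis_apply_zero {n : ℕ} (hn : finrank ℝ E = n + 1) {v : E}
    (hv : ‖v‖ = 1) : ∃ b : OrthonormalBasis (Fin (n + 1)) ℝ E, b 0 = v := by
  have hon : Orthonormal ℝ (({0} : Set (Fin (n + 1))).domRestrict fun _ => v) :=
    ⟨fun _ => hv, fun i j hij => (hij (Subtype.ext (i.2.trans j.2.symm))).elim⟩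
  obtain ⟨b, hb⟩ := hon.exists_orthonormalBasis_extension_of_card_eq (by simpa using hn)
  exact ⟨b, hb 0 rfl⟩

open Module in
theorem integral_ball_comp_inner [MeasurableSpace E] [BorelSpace E] {n : ℕ}
    (hn : finrank ℝ E = n + 1) {v : E} (hv : ‖v‖ = 1)
    (c : E) {ε : ℝ} (hε : 0 ≤ ε) {F : Type*} [NormedAddCommGroup F] [NormedSpace ℝ F]
    [CompleteSpace F] {f : ℝ → F} (hf : Continuous f) :
    ∫ z in Metric.ball c ε, f ⟪v, z⟫ =
      ∫ u, volume.real (Metric.ball (0 : EuclideanSpace ℝ (Fin n))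
        √(ε ^ 2 - (u - ⟪v, c⟫) ^ 2)) • f u := by
  obtain ⟨b, rfl⟩ := exists_orthonormalBasis_apply_zero hn hv
  set e := b.measurableEquiv.trans (EuclideanSpace.headTailEquiv n)
  have he : MeasurePreserving e :=
    b.measurePreserving_measurableEquiv.trans (EuclideanSpace.measurePreserving_headTailEquiv n)
  have he_fst (z : E) : (e z).1 = ⟪b 0, z⟫ := b.repr_apply_apply z 0
  have he_dist (z : E) : dist z c ^ 2 = ((e z).1 - (e c).1) ^ 2 + dist (e z).2 (e c).2 ^ 2 := by
    rw [← b.repr.dist_map]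
    exact EuclideanSpace.dist_sq_eq_sq_add_dist_headTailEquiv_sq _ _
  set s := {p : ℝ × EuclideanSpace ℝ (Fin n) | (p.1 - (e c).1) ^ 2 + dist p.2 (e c).2 ^ 2 < ε ^ 2}
  have hs : MeasurableSet s := measurableSet_lt (by fun_prop) measurable_const
  have hpre : e ⁻¹' s = Metric.ball c ε := by
    ext z
    rw [Set.mem_preimage, Metric.mem_ball, ← pow_lt_pow_iff_left₀ dist_nonneg hε two_ne_zero,
      he_dist]
    rfl
  have hslice (u : ℝ) : Prod.mk u ⁻¹' s = Metric.ball (e c).2 √(ε ^ 2 - (u - (e c).1) ^ 2) := by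
    ext w
    rw [Set.mem_preimage, Metric.mem_ball, Real.lt_sqrt dist_nonneg, lt_sub_iff_add_lt']
    rfl
  have hint : IntegrableOn (fun p => f p.1) s := by
    rw [← he.integrableOn_comp_preimage e.measurableEmbedding, hpre]
    simp only [Function.comp_def, he_fst]
    exact ((hf.comp (continuous_const.inner continuous_id)).continuousOn.integrableOn_compact
      (isCompact_closedBall c ε)).mono_set Metric.ball_subset_closedBall
  calc ∫ z in Metric.ball c ε, f ⟪b 0, z⟫
      = ∫ p in s, f p.1 := by
        rw [← hpre, ← he.setIntegral_preimage_emb e.measurableEmbedding]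
        simp only [he_fst]
    _ = _ := by
        rw [Measure.volume_eq_prod] at hint ⊢
        rw [setIntegral_prod_comp_fst hs hint]
        simp only [hslice, Measure.addHaar_real_ball_center, he_fst]

end Slicing

theorem EuclideanSpace.volume_real_ball_sqrt_fin_two (x : EuclideanSpace ℝ (Fin 2)) (R : ℝ) :
    volume.real (Metric.ball x √R) = Real.pi * max 0 R := by
  rw [measureReal_def, EuclideanSpace.volume_ball_fin_two, ENNReal.toReal_mul,
    ENNReal.toReal_pow, ENNReal.toReal_ofReal (Real.sqrt_nonneg R),
    ENNReal.toReal_ofReal Real.pi_pos.le, Real.sq_sqrt', max_comm, mul_comm]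

def ballSectionArea (ε a t : ℝ) : ℝ := Real.pi * max 0 (ε ^ 2 - (t - a) ^ 2)

section BallSectionArea

variable {ε a t : ℝ}

theorem continuous_ballSectionArea (ε a : ℝ) : Continuous (ballSectionArea ε a) :=
  continuous_const.mul (continuous_const.max (by fun_prop))

theorem ballSectionArea_nonneg (ε a t : ℝ) : 0 ≤ ballSectionArea ε a t :=
  mul_nonneg Real.pi_pos.le (le_max_left _ _)

theorem ballSectionArea_pos (ht : t ∈ Set.Ioo (a - ε) (a + ε)) : 0 < ballSectionArea ε a t := by
  obtain ⟨h₁, h₂⟩ := ht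
  exact mul_pos Real.pi_pos (lt_max_of_lt_right (by nlinarith))

theorem ballSectionArea_eq_zero (hε : 0 ≤ ε) (ht : t ∉ Set.Ioo (a - ε) (a + ε)) :
    ballSectionArea ε a t = 0 := by
  rw [Set.mem_Ioo, not_and_or, not_lt, not_lt] at ht
  have : ε ^ 2 ≤ (t - a) ^ 2 := by rcases ht with h | h <;> nlinarith
  rw [ballSectionArea, max_eq_left (by linarith), mul_zero]

theorem hasCompactSupport_ballSectionArea (hε : 0 ≤ ε) :
    HasCompactSupport (ballSectionArea ε a) :=
  HasCompactSupport.intro isCompact_Icc fun _ ht =>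
    ballSectionArea_eq_zero hε fun ht' => ht (Set.Ioo_subset_Icc_self ht')

end BallSectionArea

open Module in
theorem integral_ball_comp_inner_eq_ballSectionArea {E : Type*} [NormedAddCommGroup E]
    [InnerProductSpace ℝ E] [FiniteDimensional ℝ E] [MeasurableSpace E] [BorelSpace E]
    (hE : finrank ℝ E = 3) {v : E} (hv : ‖v‖ = 1) (c : E) {ε : ℝ} (hε : 0 ≤ ε)
    {F : Type*} [NormedAddCommGroup F] [NormedSpace ℝ F] [CompleteSpace F] {f : ℝ → F}
    (hf : Continuous f) :
    ∫ z in Metric.ball c ε, f ⟪v, z⟫ = ∫ u, ballSectionArea ε ⟪v, c⟫ u • f u := by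
  simp only [integral_ball_comp_inner hE hv c hε hf, EuclideanSpace.volume_real_ball_sqrt_fin_two,
    ballSectionArea]

theorem setIntegral_Ioo_add_left (A : ℝ → ℝ) (ξ p q : ℝ) :
    ∫ t in Set.Ioo (ξ + p) (ξ + q), A t = ∫ s in Set.Ioo p q, A (ξ + s) := by
  rw [← (measurePreserving_add_left volume ξ).setIntegral_preimage_emb
    (measurableEmbedding_addLeft ξ), Set.preimage_const_add_Ioo, add_sub_cancel_left,
    add_sub_cancel_left]

theorem integral_phase_mul_setIntegral_Ioo {A : ℝ → ℝ} (hA : Continuous A)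
    (hA_supp : HasCompactSupport A) (τ p q : ℝ) :
    ∫ ξ, phase τ ξ * ↑(∫ t in Set.Ioo (ξ + p) (ξ + q), A t) =
      (∫ s in Set.Ioo p q, phase τ (-s)) * ∫ u, phase τ u * A u := by
  have hint : Integrable (Function.uncurry fun ξ s => phase τ ξ * (A (ξ + s) : ℂ))
      (volume.prod (volume.restrict (Set.Ioo p q))) := by
    have hcont : Continuous (Function.uncurry fun ξ s => phase τ ξ * (A (ξ + s) : ℂ)) := by
      have := continuous_phase τ
      fun_prop
    refine (integrable_prod_iff' hcont.aestronglyMeasurable).2 ⟨.of_forall fun s => ?_, ?_⟩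
    · exact ((hA.integrable_of_hasCompactSupport hA_supp).comp_add_right s).ofReal.bdd_mul
        (continuous_phase τ).aestronglyMeasurable (.of_forall fun ξ => (norm_phase τ ξ).le)
    · simp only [Function.uncurry_apply_pair, norm_mul, norm_phase, one_mul]
      exact (integrable_const (∫ ξ, ‖(A ξ : ℂ)‖)).congr
        (.of_forall fun s => (integral_add_right_eq_self (fun ξ => ‖(A ξ : ℂ)‖) s).symm)
  calc ∫ ξ, phase τ ξ * ↑(∫ t in Set.Ioo (ξ + p) (ξ + q), A t)
      = ∫ ξ, ∫ s in Set.Ioo p q, phase τ ξ * (A (ξ + s) : ℂ) := by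
        simp only [setIntegral_Ioo_add_left, integral_const_mul, integral_complex_ofReal]
    _ = ∫ s in Set.Ioo p q, ∫ ξ, phase τ ξ * (A (ξ + s) : ℂ) := integral_integral_swap hint
    _ = ∫ s in Set.Ioo p q, phase τ (-s) * ∫ u, phase τ u * A u := by
        congr 1 with s
        rw [← integral_const_mul, ← integral_sub_right_eq_self _ s]
        simp only [sub_add_cancel, phase_sub, mul_assoc, mul_comm (phase τ (-s))]
    _ = _ := integral_mul_const _ _

theorem setIntegral_Ioo_pos {A : ℝ → ℝ} (hA : Continuous A) (hA_nonneg : ∀ t, 0 ≤ A t)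
    {l r p q : ℝ} (hA_pos : ∀ t ∈ Set.Ioo l r, 0 < A t) (h : max l p < min r q) :
    0 < ∫ t in Set.Ioo p q, A t := by
  calc 0 < ∫ t in Set.Ioo (max l p) (min r q), A t := by
        rw [← integral_Ioc_eq_integral_Ioo, ← intervalIntegral.integral_of_le h.le]
        refine intervalIntegral.intervalIntegral_pos_of_pos_on (hA.intervalIntegrable _ _)
          (fun t ht => hA_pos t ⟨?_, ?_⟩) h
        · exact (le_max_left _ _).trans_lt ht.1
        · exact ht.2.trans_le (min_le_left _ _)
    _ ≤ ∫ t in Set.Ioo p q, A t :=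
        setIntegral_mono_set (hA.integrableOn_Icc.mono_set Set.Ioo_subset_Icc_self)
          (.of_forall hA_nonneg)
          (Set.Ioo_subset_Ioo (le_max_right _ _) (min_le_right _ _)).eventuallyLE

theorem stmt_10_general (y : E3) (xhat : E3) (hx : ‖xhat‖ = 1) (ε : ℝ) (hε : 0 < ε)
    (tmin tmax : ℝ) (ht : tmin < tmax)
    -- the test function `φ_{y,ε}` (extended to all `τ ∈ ℝ`):
    (φeps : ℝ → ℂ)
    (hφ : ∀ τ : ℝ, φeps τ =
      (((tmax - tmin) * (volume (Metric.ball y ε)).toReal : ℝ) : ℂ)⁻¹ *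
        ∫ t in Set.Ioo tmin tmax, ∫ z in Metric.ball y ε, phase τ (⟪xhat, z⟫ - t))
    -- `g_ε`, built out of the areas `π(ε² - (t - x̂·y)²)₊` of the planar
    -- cross-sections `{z ∈ B_ε(y) : x̂·z = t}`:
    (g : ℝ → ℝ)
    (hg : ∀ ξ : ℝ, g ξ =
      ((tmax - tmin) * (volume (Metric.ball y ε)).toReal)⁻¹ *
        ∫ t in Set.Ioo (ξ + tmin) (ξ + tmax),
          Real.pi * max 0 (ε ^ 2 - (t - ⟪xhat, y⟫) ^ 2)) :
    -- `g` is the inverse Fourier transform of `φ_{y,ε}` (up to the factor `√(2π)`):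
    (∀ τ : ℝ, φeps τ = ∫ ξ : ℝ, phase τ ξ * (g ξ : ℂ)) ∧
    -- `𝓕⁻¹ φ_{y,ε} = √(2π) g` is strictly positive on the open interval:
    (∀ ξ ∈ Set.Ioo (⟪xhat, y⟫ - ε - tmax) (⟪xhat, y⟫ + ε - tmin),
      0 < Real.sqrt (2 * Real.pi) * g ξ) ∧
    -- and vanishes outside it:
    (∀ ξ : ℝ, ξ ∉ Set.Ioo (⟪xhat, y⟫ - ε - tmax) (⟪xhat, y⟫ + ε - tmin) →
      Real.sqrt (2 * Real.pi) * g ξ = 0) := by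
  set a := ⟪xhat, y⟫
  set C := (tmax - tmin) * (volume (Metric.ball y ε)).toReal
  have hC : 0 < C := mul_pos (sub_pos.mpr ht)
    (ENNReal.toReal_pos (Metric.measure_ball_pos volume y hε).ne' measure_ball_lt_top.ne)
  have hg' (ξ : ℝ) : g ξ = C⁻¹ * ∫ t in Set.Ioo (ξ + tmin) (ξ + tmax), ballSectionArea ε a t :=
    hg ξ
  refine ⟨fun τ => ?_, fun ξ hξ => ?_, fun ξ hξ => ?_⟩
  · calc φeps τ = (C : ℂ)⁻¹ * ((∫ s in Set.Ioo tmin tmax, phase τ (-s)) *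
          ∫ u, phase τ u * ballSectionArea ε a u) := by
          simp only [hφ, phase_sub, integral_mul_const,
            integral_ball_comp_inner_eq_ballSectionArea finrank_euclideanSpace_fin hx y hε.le
              (continuous_phase τ), Complex.real_smul, integral_const_mul,
            mul_comm (ballSectionArea _ _ _ : ℂ)]
          ring
      _ = ∫ ξ, phase τ ξ * (g ξ : ℂ) := by
          simp only [hg', Complex.ofReal_mul, Complex.ofReal_inv, mul_left_comm _ (C⁻¹ : ℂ),
            integral_const_mul]
          rw [integral_phase_mul_setIntegral_Ioo (continuous_ballSectionArea ε a)
            (hasCompactSupport_ballSectionArea hε.le)]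
  · obtain ⟨hξ₁, hξ₂⟩ := hξ
    rw [hg']
    refine mul_pos (Real.sqrt_pos.mpr (by positivity)) (mul_pos (inv_pos.mpr hC) ?_)
    refine setIntegral_Ioo_pos (continuous_ballSectionArea ε a) (ballSectionArea_nonneg ε a)
      (fun t => ballSectionArea_pos) ?_
    exact max_lt (lt_min (by linarith) (by linarith)) (lt_min (by linarith) (by linarith))
  · rw [hg', setIntegral_eq_zero_of_forall_eq_zero, mul_zero, mul_zero]
    intro t ht
    refine ballSectionArea_eq_zero hε.le fun ht' => hξ ⟨?_, ?_⟩
    · linarith [ht.2, ht'.1]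
    · linarith [ht.1, ht'.2]

theorem stmt_10 (y : E3) (xhat : E3) (hx : ‖xhat‖ = 1) (ε : ℝ) (hε : 0 < ε)
    (tmin tmax : ℝ) (htmin : 0 ≤ tmin) (ht : tmin < tmax)
    -- the test function `φ_{y,ε}` (extended to all `τ ∈ ℝ`):
    (φeps : ℝ → ℂ)
    (hφ : ∀ τ : ℝ, φeps τ =
      (((tmax - tmin) * (volume (Metric.ball y ε)).toReal : ℝ) : ℂ)⁻¹ *
        ∫ t in Set.Ioo tmin tmax, ∫ z in Metric.ball y ε, phase τ (⟪xhat, z⟫ - t))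
    -- `g_ε`, built out of the areas `π(ε² - (t - x̂·y)²)₊` of the planar
    -- cross-sections `{z ∈ B_ε(y) : x̂·z = t}`:
    (g : ℝ → ℝ)
    (hg : ∀ ξ : ℝ, g ξ =
      ((tmax - tmin) * (volume (Metric.ball y ε)).toReal)⁻¹ *
        ∫ t in Set.Ioo (ξ + tmin) (ξ + tmax),
          Real.pi * max 0 (ε ^ 2 - (t - ⟪xhat, y⟫) ^ 2)) :
    -- `g` is the inverse Fourier transform of `φ_{y,ε}` (up to the factor `√(2π)`):
    (∀ τ : ℝ, φeps τ = ∫ ξ : ℝ, phase τ ξ * (g ξ : ℂ)) ∧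
    -- `𝓕⁻¹ φ_{y,ε} = √(2π) g` is strictly positive on the open interval:
    (∀ ξ ∈ Set.Ioo (⟪xhat, y⟫ - ε - tmax) (⟪xhat, y⟫ + ε - tmin),
      0 < Real.sqrt (2 * Real.pi) * g ξ) ∧
    -- and vanishes outside it:
    (∀ ξ : ℝ, ξ ∉ Set.Ioo (⟪xhat, y⟫ - ε - tmax) (⟪xhat, y⟫ + ε - tmin) →
      Real.sqrt (2 * Real.pi) * g ξ = 0) :=
  stmt_10_general y xhat hx ε hε tmin tmax ht φeps hφ g hg

end
end
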